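/- Let F : ℝ³ → ℝ⁴ be the chart map of the cubic model of S³, defined by F(x) = (1, x)/√(1 + ‖x‖₂²). For every x ∈ ℝ³ with ‖x‖_∞ ≤ 1 (i.e. x in the cube [-1,1]³) and every v ∈ ℝ³, the derivative of F satisfies ‖DF(x)(v)‖₂ ≥ (1/4)·‖v‖₂. -/

import Mathlib

/-- The sup norm of a point of Euclidean space (the `ℓ^∞` norm). -/
noncomputable def supNorm {m : ℕ} (q : EuclideanSpace ℝ (Fin m)) : ℝ :=
  ‖(EuclideanSpace.equiv (Fin m) ℝ) q‖

/-- The chart map `F : ℝ³ → ℝ⁴` of the cubic model of `S³`: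
`F(x) = (1, x) / √(1 + ‖x‖₂²)`. -/
noncomputable def chartMap (x : EuclideanSpace ℝ (Fin 3)) : EuclideanSpace ℝ (Fin 4) :=
  (Real.sqrt (1 + ‖x‖ ^ 2))⁻¹ •
    (EuclideanSpace.equiv (Fin 4) ℝ).symm (Fin.cons 1 ((EuclideanSpace.equiv (Fin 3) ℝ) x))

namespace ChartAux

/-- the linear embedding `v ↦ (0, v)` as a plain linear map -/
noncomputable def embL : EuclideanSpace ℝ (Fin 3) →ₗ[ℝ] EuclideanSpace ℝ (Fin 4) where
  toFun v := (EuclideanSpace.equiv (Fin 4) ℝ).symm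
      (Fin.cons 0 ((EuclideanSpace.equiv (Fin 3) ℝ) v))
  map_add' u w := by
    apply PiLp.ext
    intro i
    refine Fin.cases ?_ ?_ i <;> simp [EuclideanSpace.equiv]
  map_smul' c u := by
    apply PiLp.ext
    intro i
    refine Fin.cases ?_ ?_ i <;> simp [EuclideanSpace.equiv]

noncomputable def A : EuclideanSpace ℝ (Fin 3) →L[ℝ] EuclideanSpace ℝ (Fin 4) :=
  LinearMap.toContinuousLinearMap embL

noncomputable def c0 : EuclideanSpace ℝ (Fin 4) :=
  (EuclideanSpace.equiv (Fin 4) ℝ).symm (Fin.cons 1 0)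

lemma A_zero (u : EuclideanSpace ℝ (Fin 3)) : A u 0 = 0 := rfl
lemma A_one (u : EuclideanSpace ℝ (Fin 3)) : A u 1 = u 0 := rfl
lemma A_two (u : EuclideanSpace ℝ (Fin 3)) : A u 2 = u 1 := rfl
lemma A_three (u : EuclideanSpace ℝ (Fin 3)) : A u 3 = u 2 := rfl
lemma A_succ (u : EuclideanSpace ℝ (Fin 3)) (i : Fin 3) : A u i.succ = u i := by
  refine Fin.cases rfl (fun j => ?_) i
  refine Fin.cases rfl (fun k => ?_) j
  refine Fin.cases rfl (fun l => ?_) k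
  exact absurd l.2 (by omega)
lemma c0_zero : c0 0 = 1 := rfl
lemma c0_succ (i : Fin 3) : c0 i.succ = 0 := by
  refine Fin.cases rfl (fun j => ?_) i
  refine Fin.cases rfl (fun k => ?_) j
  refine Fin.cases rfl (fun l => ?_) k
  exact absurd l.2 (by omega)

lemma chartMap_eq (x : EuclideanSpace ℝ (Fin 3)) :
    chartMap x = (Real.sqrt (1 + ‖x‖ ^ 2))⁻¹ • (c0 + A x) := by
  unfold chartMap
  congr 1
  apply PiLp.ext
  intro i
  refine Fin.cases ?_ ?_ i <;>
    simp [A_zero, A_succ, c0_zero, c0_succ, EuclideanSpace.equiv]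

lemma inner_AA (u w : EuclideanSpace ℝ (Fin 3)) :
    (inner ℝ (A u) (A w) : ℝ) = inner ℝ u w := by
  simp [PiLp.inner_apply, Fin.sum_univ_four, Fin.sum_univ_three,
    A_zero, A_one, A_two, A_three]

lemma inner_c0A (w : EuclideanSpace ℝ (Fin 3)) :
    (inner ℝ c0 (A w) : ℝ) = 0 := by
  have h1 : c0 1 = 0 := rfl
  have h2 : c0 2 = 0 := rfl
  have h3 : c0 3 = 0 := rfl
  simp [PiLp.inner_apply, Fin.sum_univ_four, A_zero, h1, h2, h3]

lemma inner_Ac0 (w : EuclideanSpace ℝ (Fin 3)) :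
    (inner ℝ (A w) c0 : ℝ) = 0 := by
  rw [real_inner_comm]; exact inner_c0A w

lemma inner_c0c0 : (inner ℝ c0 c0 : ℝ) = 1 := by
  have h1 : c0 1 = 0 := rfl
  have h2 : c0 2 = 0 := rfl
  have h3 : c0 3 = 0 := rfl
  simp only [PiLp.inner_apply]
  simp [Fin.sum_univ_four, c0_zero, h1, h2, h3]

lemma norm_sq_comb (a b : ℝ) (u w : EuclideanSpace ℝ (Fin 3)) :
    ‖a • A u + b • (c0 + A w)‖ ^ 2
      = a ^ 2 * ‖u‖ ^ 2 + 2 * a * b * (inner ℝ w u : ℝ) + b ^ 2 * (1 + ‖w‖ ^ 2) := by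
  rw [← real_inner_self_eq_norm_sq]
  simp only [inner_add_left, inner_add_right, real_inner_smul_left, real_inner_smul_right,
    inner_AA, inner_c0c0, inner_c0A, inner_Ac0, real_inner_comm u w]
  rw [real_inner_self_eq_norm_sq, real_inner_self_eq_norm_sq]
  ring

lemma scalar_bound (n m t r : ℝ) (hm : 0 ≤ m) (hn : 0 ≤ n) (hr0 : 0 < r)
    (hr2 : r ^ 2 = 1 + n) (hCS : t ^ 2 ≤ n * m) (hn3 : n ≤ 3) :
    1 / 16 * m ≤ (r⁻¹) ^ 2 * m + 2 * r⁻¹ * ((-(1 / (2 * r)) / r ^ 2) * (2 * t)) * t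
      + ((-(1 / (2 * r)) / r ^ 2) * (2 * t)) ^ 2 * (1 + n) := by
  have hrne : r ≠ 0 := hr0.ne'
  have hsp : (0:ℝ) < 1 + n := by linarith
  have key : (r⁻¹) ^ 2 * m + 2 * r⁻¹ * ((-(1 / (2 * r)) / r ^ 2) * (2 * t)) * t
      + ((-(1 / (2 * r)) / r ^ 2) * (2 * t)) ^ 2 * (1 + n)
      = (m * (1 + n) - t ^ 2) / (1 + n) ^ 2 := by
    rw [← hr2]
    field_simp
    ring
  rw [key, le_div_iff₀ (by positivity)]
  nlinarith [hCS, hm, hn, hn3, mul_nonneg (mul_nonneg (by linarith : (0:ℝ) ≤ 3 - n)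
    (by linarith : (0:ℝ) ≤ 5 + n)) hm]

end ChartAux

open ChartAux in
/-- For every point `x` of the cube `[-1,1]³` (i.e. `‖x‖_∞ ≤ 1`) and every
tangent vector `v`, the derivative of the chart map satisfies `‖DF(x)(v)‖₂ ≥ (1/4)·‖v‖₂`. -/
theorem chartMap_fderiv_lower_bound (x : EuclideanSpace ℝ (Fin 3)) (hx : supNorm x ≤ 1)
    (v : EuclideanSpace ℝ (Fin 3)) :
    (1 / 4 : ℝ) * ‖v‖ ≤ ‖fderiv ℝ chartMap x v‖ := by
  have hs0 : (0:ℝ) < 1 + ‖x‖ ^ 2 := by positivity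
  have hr0 : 0 < Real.sqrt (1 + ‖x‖ ^ 2) := Real.sqrt_pos.2 hs0
  have hr2 : Real.sqrt (1 + ‖x‖ ^ 2) ^ 2 = 1 + ‖x‖ ^ 2 := Real.sq_sqrt hs0.le
  -- the derivative of the scalar factor
  have hsq : HasFDerivAt (fun y : EuclideanSpace ℝ (Fin 3) => 1 + ‖y‖ ^ 2)
      ((2 : ℝ) • (innerSL ℝ x)) x := by
    have h := ((hasFDerivAt_id (𝕜 := ℝ) x).norm_sq).const_add (1 : ℝ)
    simp only [id_eq] at h
    have heq : ((2 : ℕ) • ((innerSL ℝ x).comp (ContinuousLinearMap.id ℝ _)) :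
        EuclideanSpace ℝ (Fin 3) →L[ℝ] ℝ) = (2 : ℝ) • (innerSL ℝ x) := by
      ext w; simp [two_smul]
    rw [heq] at h
    exact h
  have hφ : HasDerivAt (fun u : ℝ => (Real.sqrt u)⁻¹)
      (-(1 / (2 * Real.sqrt (1 + ‖x‖ ^ 2))) / (Real.sqrt (1 + ‖x‖ ^ 2)) ^ 2) (1 + ‖x‖ ^ 2) :=
    (Real.hasDerivAt_sqrt hs0.ne').inv hr0.ne'
  have hf : HasFDerivAt (fun y : EuclideanSpace ℝ (Fin 3) => (Real.sqrt (1 + ‖y‖ ^ 2))⁻¹)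
      ((-(1 / (2 * Real.sqrt (1 + ‖x‖ ^ 2))) / (Real.sqrt (1 + ‖x‖ ^ 2)) ^ 2) •
        ((2 : ℝ) • (innerSL ℝ x))) x :=
    hφ.comp_hasFDerivAt (f := fun y : EuclideanSpace ℝ (Fin 3) => 1 + ‖y‖ ^ 2) x hsq
  -- the derivative of the vector factor
  have hg : HasFDerivAt (fun y : EuclideanSpace ℝ (Fin 3) => c0 + A y) A x := by
    simpa using (A.hasFDerivAt (x := x)).const_add c0
  have hF : HasFDerivAt (fun y : EuclideanSpace ℝ (Fin 3) =>
        (Real.sqrt (1 + ‖y‖ ^ 2))⁻¹ • (c0 + A y))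
      ((Real.sqrt (1 + ‖x‖ ^ 2))⁻¹ •
          (A : EuclideanSpace ℝ (Fin 3) →L[ℝ] EuclideanSpace ℝ (Fin 4)) +
        ((-(1 / (2 * Real.sqrt (1 + ‖x‖ ^ 2))) / (Real.sqrt (1 + ‖x‖ ^ 2)) ^ 2) •
          ((2 : ℝ) • (innerSL ℝ x))).smulRight (c0 + A x)) x := hf.smul hg
  rw [show chartMap = fun y : EuclideanSpace ℝ (Fin 3) =>
        (Real.sqrt (1 + ‖y‖ ^ 2))⁻¹ • (c0 + A y) from funext chartMap_eq, hF.fderiv]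
  have happ : ((Real.sqrt (1 + ‖x‖ ^ 2))⁻¹ •
          (A : EuclideanSpace ℝ (Fin 3) →L[ℝ] EuclideanSpace ℝ (Fin 4)) +
        ((-(1 / (2 * Real.sqrt (1 + ‖x‖ ^ 2))) / (Real.sqrt (1 + ‖x‖ ^ 2)) ^ 2) •
          ((2 : ℝ) • (innerSL ℝ x))).smulRight (c0 + A x)) v
      = (Real.sqrt (1 + ‖x‖ ^ 2))⁻¹ • A v +
        ((-(1 / (2 * Real.sqrt (1 + ‖x‖ ^ 2))) / (Real.sqrt (1 + ‖x‖ ^ 2)) ^ 2) *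
          (2 * (inner ℝ x v : ℝ))) • (c0 + A x) := by
    simp only [ContinuousLinearMap.add_apply, ContinuousLinearMap.smul_apply,
      ContinuousLinearMap.smulRight_apply, innerSL_apply_apply, smul_eq_mul,
      mul_smul]
  rw [happ]
  -- Cauchy–Schwarz
  have hCS : (inner ℝ x v : ℝ) ^ 2 ≤ ‖x‖ ^ 2 * ‖v‖ ^ 2 := by
    have h := abs_real_inner_le_norm x v
    nlinarith [abs_nonneg (inner ℝ x v : ℝ), sq_abs (inner ℝ x v : ℝ), norm_nonneg x, norm_nonneg v]
  -- bound ‖x‖² ≤ 3 from the sup-norm hypothesis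
  have hx2 : ‖x‖ ^ 2 ≤ 3 := by
    have hnorm : ‖x‖ = Real.sqrt (∑ i, ‖x i‖ ^ 2) := by
      rw [EuclideanSpace.norm_eq]
    have hsum : ‖x‖ ^ 2 = ∑ i, ‖x i‖ ^ 2 := by
      rw [hnorm, Real.sq_sqrt (by positivity)]
    have hi : ∀ i : Fin 3, ‖x i‖ ≤ 1 := fun i =>
      le_trans (norm_le_pi_norm (f := fun j => x j) i) hx
    have hi2 : ∀ i : Fin 3, ‖x i‖ ^ 2 ≤ 1 := fun i => by
      nlinarith [hi i, norm_nonneg (x i)]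
    rw [hsum, Fin.sum_univ_three]
    linarith [hi2 0, hi2 1, hi2 2]
  -- final bound
  have hlow : 1 / 16 * ‖v‖ ^ 2 ≤ ‖(Real.sqrt (1 + ‖x‖ ^ 2))⁻¹ • A v +
      ((-(1 / (2 * Real.sqrt (1 + ‖x‖ ^ 2))) / (Real.sqrt (1 + ‖x‖ ^ 2)) ^ 2) *
        (2 * (inner ℝ x v : ℝ))) • (c0 + A x)‖ ^ 2 := by
    rw [norm_sq_comb]
    exact scalar_bound (‖x‖ ^ 2) (‖v‖ ^ 2) (inner ℝ x v) (Real.sqrt (1 + ‖x‖ ^ 2))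
      (sq_nonneg _) (sq_nonneg _) hr0 hr2 hCS hx2
  nlinarith [hlow, norm_nonneg v, norm_nonneg ((Real.sqrt (1 + ‖x‖ ^ 2))⁻¹ • A v +
      ((-(1 / (2 * Real.sqrt (1 + ‖x‖ ^ 2))) / (Real.sqrt (1 + ‖x‖ ^ 2)) ^ 2) *
        (2 * (inner ℝ x v : ℝ))) • (c0 + A x))]
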